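/- arXiv:1708.09640 — 2 statements merged into one kernel-verified Lean document; each statement's English description precedes it below -/
import Mathlib

section
/- Let 𝓛 be a second-order elliptic operator on ℝ^d satisfying the standing assumptions, let V be a locally Hölder continuous potential with λ* := λ*(𝓛,V) finite, and suppose 𝓛 + V − λ* is critical in ℝ^d with ground state Ψ₁*. Then for every λ > λ* there is no C² function Ψ on ℝ^d, other than the zero function, satisfying 𝓛Ψ + VΨ = λΨ on ℝ^d together with |Ψ(x)| ≤ κ Ψ₁*(x) for all x and some constant κ > 0. -/
/-!
Write `Ψ = φ Ψ₁*` and `ψ = φ² Ψ₁*`. The product rule for `𝓛` gives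
`(𝓛 + V - λ*) ψ = 2 (λ - λ*) ψ + 2 Ψ₁* ⟨∇φ, a ∇φ⟩ ≥ 2 (λ - λ*) ψ`, and `0 ≤ ψ ≤ κ² Ψ₁*`.
Let `M = sup ψ / Ψ₁*`; then `M Ψ₁* - ψ ≥ 0` is a supersolution of `𝓛 + V - λ*`. If it were
positive everywhere, minimality of the growth of `Ψ₁*` would give `ε Ψ₁* ≤ M Ψ₁* - ψ` for some
`ε > 0`, contradicting the choice of `M`. So it vanishes at some point, which is a minimum, and
there the maximum principle gives `0 ≤ -2 (λ - λ*) ψ`. Hence `M ≤ 0` and `ψ = 0`.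
-/

open Metric Set Filter

noncomputable section

/-- `ℝ^d` as a Euclidean space. -/
abbrev Euc (d : ℕ) := EuclideanSpace ℝ (Fin d)

/-- First partial derivative `∂u/∂xᵢ`. -/
def pd {d : ℕ} (u : Euc d → ℝ) (i : Fin d) (x : Euc d) : ℝ :=
  fderiv ℝ u x (EuclideanSpace.single i 1)

/-- Second partial derivative `∂²u/∂xᵢ∂xⱼ`. -/
def pd2 {d : ℕ} (u : Euc d → ℝ) (i j : Fin d) (x : Euc d) : ℝ :=
  fderiv ℝ (fun y => pd u j y) x (EuclideanSpace.single i 1)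

/-- The second-order operator `𝓛u = Σ aᶦʲ ∂ᵢⱼu + Σ bᶦ ∂ᵢu`. -/
def Lop {d : ℕ} (a : Euc d → Matrix (Fin d) (Fin d) ℝ) (b : Euc d → Euc d)
    (u : Euc d → ℝ) (x : Euc d) : ℝ :=
  (∑ i, ∑ j, a x i j * pd2 u i j x) + ∑ i, b x i * pd u i x

/-- Frobenius norm of a matrix. -/
def frob {d : ℕ} (m : Matrix (Fin d) (Fin d) ℝ) : ℝ :=
  Real.sqrt (∑ i, ∑ j, (m i j) ^ 2)

/-- The quadratic form `⟨ξ, m ξ⟩`. -/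
def quadForm {d : ℕ} (m : Matrix (Fin d) (Fin d) ℝ) (ξ : Euc d) : ℝ :=
  ∑ i, ∑ j, m i j * ξ i * ξ j

/-- Local Hölder continuity on a set. -/
def LocallyHolderOn {E F : Type*} [PseudoMetricSpace E] [PseudoMetricSpace F]
    (f : E → F) (s : Set E) : Prop :=
  ∀ x ∈ s, ∃ (C r : NNReal), 0 < r ∧ r ≤ 1 ∧ ∃ ε > 0, HolderOnWith C r f (Metric.ball x ε ∩ s)

/-- Local Hölder continuity. -/
def LocallyHolder {E F : Type*} [PseudoMetricSpace E] [PseudoMetricSpace F] (f : E → F) : Prop :=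
  LocallyHolderOn f Set.univ

/-- The set of `λ ∈ ℝ` admitting a positive C² supersolution of `𝓛φ + Vφ ≤ λφ` on `D`. -/
def supersolutions {d : ℕ} (a : Euc d → Matrix (Fin d) (Fin d) ℝ) (b : Euc d → Euc d)
    (V : Euc d → ℝ) (D : Set (Euc d)) : Set ℝ :=
  {lam | ∃ φ : Euc d → ℝ, (∀ x ∈ D, 0 < φ x) ∧ ContDiffOn ℝ 2 φ D ∧
    ∀ x ∈ D, Lop a b φ x + V x * φ x ≤ lam * φ x}

/-- The generalized principal eigenvalue `λ*(𝓛,V)` on `D`. -/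
def lamStar {d : ℕ} (a : Euc d → Matrix (Fin d) (Fin d) ℝ) (b : Euc d → Euc d)
    (V : Euc d → ℝ) (D : Set (Euc d)) : ℝ :=
  sInf (supersolutions a b V D)

/-- `λ*(𝓛,V)` is finite: the defining set is nonempty and bounded below. -/
def lamStarFinite {d : ℕ} (a : Euc d → Matrix (Fin d) (Fin d) ℝ) (b : Euc d → Euc d)
    (V : Euc d → ℝ) (D : Set (Euc d)) : Prop :=
  (supersolutions a b V D).Nonempty ∧ BddBelow (supersolutions a b V D)

/-- A ground state of `𝓛 + W` in the open connected set `D`: a positive C² solution of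
minimal growth at infinity. -/
def IsGroundState {d : ℕ} (a : Euc d → Matrix (Fin d) (Fin d) ℝ) (b : Euc d → Euc d)
    (W : Euc d → ℝ) (u : Euc d → ℝ) (D : Set (Euc d)) : Prop :=
  (∀ x ∈ D, 0 < u x) ∧ ContDiffOn ℝ 2 u D ∧ (∀ x ∈ D, Lop a b u x + W x * u x = 0) ∧
  ∀ K : Set (Euc d), IsCompact K → K ⊆ D →
    ∀ v : Euc d → ℝ, ContDiffOn ℝ 2 v (D \ K) → (∀ x ∈ D \ K, 0 < v x) →
      (∀ x ∈ D \ K, Lop a b v x + W x * v x ≤ 0) →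
      ∃ K' : Set (Euc d), IsCompact K' ∧ K ⊆ K' ∧ K' ⊆ D ∧
        ∃ κ > 0, ∀ x ∈ D \ K', κ * u x ≤ v x

/-- Membership in `C₀⁺(ℝ^d)`: continuous, nonnegative, not identically zero, vanishing
at infinity. -/
def C0plus {d : ℕ} (h : Euc d → ℝ) : Prop :=
  Continuous h ∧ (∀ x, 0 ≤ h x) ∧ (∃ x, h x ≠ 0) ∧ Tendsto h (cocompact (Euc d)) (nhds 0)

/-- `λ*` is strictly monotone at `V` on the right. -/
def StrictMonoRight {d : ℕ} (a : Euc d → Matrix (Fin d) (Fin d) ℝ) (b : Euc d → Euc d)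
    (V : Euc d → ℝ) : Prop :=
  ∀ h : Euc d → ℝ, C0plus h →
    lamStar a b V Set.univ < lamStar a b (fun x => V x + h x) Set.univ

/-- `λ*` is strictly monotone at `V` (on both sides). -/
def StrictMonoAt {d : ℕ} (a : Euc d → Matrix (Fin d) (Fin d) ℝ) (b : Euc d → Euc d)
    (V : Euc d → ℝ) : Prop :=
  ∀ h : Euc d → ℝ, C0plus h →
    lamStar a b (fun x => V x - h x) Set.univ < lamStar a b V Set.univ ∧
    lamStar a b V Set.univ < lamStar a b (fun x => V x + h x) Set.univ

/-- Standing assumptions (A1)–(A3) with `b` Borel measurable and locally bounded. -/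
structure StandingB {d : ℕ} (a : Euc d → Matrix (Fin d) (Fin d) ℝ) (b : Euc d → Euc d) : Prop where
  posdef : ∀ x, (a x).PosDef
  aLip : ∀ R > 0, ∃ C > 0, ∀ x y : Euc d, ‖x‖ ≤ R → ‖y‖ ≤ R →
    frob (a x - a y) ≤ C * ‖x - y‖
  bMeas : Measurable b
  bLocBdd : ∀ R > 0, ∃ C, ∀ x : Euc d, ‖x‖ ≤ R → ‖b x‖ ≤ C
  nondeg : ∀ R > 0, ∃ C > 0, ∀ x : Euc d, ‖x‖ ≤ R → ∀ ξ : Euc d,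
    C⁻¹ * ‖ξ‖ ^ 2 ≤ quadForm (a x) ξ
  growth : ∃ C₀ > 0, ∀ x : Euc d,
    max (∑ i, b x i * x i) 0 + frob (a x) ≤ C₀ * (1 + ‖x‖ ^ 2)

/-- Standing assumptions (A1)–(A3) with `b` locally Hölder continuous. -/
structure StandingH {d : ℕ} (a : Euc d → Matrix (Fin d) (Fin d) ℝ) (b : Euc d → Euc d) : Prop where
  posdef : ∀ x, (a x).PosDef
  aLip : ∀ R > 0, ∃ C > 0, ∀ x y : Euc d, ‖x‖ ≤ R → ‖y‖ ≤ R →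
    frob (a x - a y) ≤ C * ‖x - y‖
  bHolder : LocallyHolder b
  nondeg : ∀ R > 0, ∃ C > 0, ∀ x : Euc d, ‖x‖ ≤ R → ∀ ξ : Euc d,
    C⁻¹ * ‖ξ‖ ^ 2 ≤ quadForm (a x) ξ
  growth : ∃ C₀ > 0, ∀ x : Euc d,
    max (∑ i, b x i * x i) 0 + frob (a x) ≤ C₀ * (1 + ‖x‖ ^ 2)


open Topology

section Calculus

variable {d : ℕ}

theorem fderiv_apply_eq_sum (f : Euc d → ℝ) (x η : Euc d) :
    fderiv ℝ f x η = ∑ i, η i * fderiv ℝ f x (EuclideanSpace.single i 1) := by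
  conv_lhs => rw [← (EuclideanSpace.basisFun (Fin d) ℝ).sum_repr η]
  simp [map_sum]

theorem contDiff_pd {u : Euc d → ℝ} (hu : ContDiff ℝ 2 u) (j : Fin d) :
    ContDiff ℝ 1 (pd u j) :=
  (hu.fderiv_right (by norm_num)).clm_apply contDiff_const

theorem pd_mul {f g : Euc d → ℝ} {x : Euc d} (hf : DifferentiableAt ℝ f x)
    (hg : DifferentiableAt ℝ g x) (j : Fin d) :
    pd (fun y => f y * g y) j x = f x * pd g j x + g x * pd f j x := by
  simp [pd, fderiv_fun_mul hf hg]

theorem pd_sub {f g : Euc d → ℝ} {x : Euc d} (hf : DifferentiableAt ℝ f x)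
    (hg : DifferentiableAt ℝ g x) (j : Fin d) :
    pd (fun y => f y - g y) j x = pd f j x - pd g j x := by
  simp [pd, fderiv_fun_sub hf hg]

theorem pd_const_mul {f : Euc d → ℝ} {x : Euc d} (hf : DifferentiableAt ℝ f x) (c : ℝ)
    (j : Fin d) : pd (fun y => c * f y) j x = c * pd f j x := by
  simp [pd, fderiv_const_mul hf]

theorem pd2_mul {f g : Euc d → ℝ} (hf : ContDiff ℝ 2 f) (hg : ContDiff ℝ 2 g)
    (i j : Fin d) (x : Euc d) :
    pd2 (fun y => f y * g y) i j x =
      f x * pd2 g i j x + pd f i x * pd g j x + pd g i x * pd f j x + g x * pd2 f i j x := by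
  have hfd := hf.differentiable two_ne_zero
  have hgd := hg.differentiable two_ne_zero
  have hpf := (contDiff_pd hf j).differentiable one_ne_zero
  have hpg := (contDiff_pd hg j).differentiable one_ne_zero
  have hpd : pd (fun y => f y * g y) j = fun y => f y * pd g j y + g y * pd f j y :=
    funext fun y => pd_mul (hfd y) (hgd y) j
  rw [pd2, hpd, fderiv_fun_add ((hfd x).fun_mul (hpg x)) ((hgd x).fun_mul (hpf x)),
    fderiv_fun_mul (hfd x) (hpg x), fderiv_fun_mul (hgd x) (hpf x)]
  simp only [add_apply, smul_apply, smul_eq_mul]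
  unfold pd2 pd
  ring

theorem pd2_sub {f g : Euc d → ℝ} (hf : ContDiff ℝ 2 f) (hg : ContDiff ℝ 2 g)
    (i j : Fin d) (x : Euc d) :
    pd2 (fun y => f y - g y) i j x = pd2 f i j x - pd2 g i j x := by
  have hpd : pd (fun y => f y - g y) j = fun y => pd f j y - pd g j y :=
    funext fun y => pd_sub (hf.differentiable two_ne_zero y) (hg.differentiable two_ne_zero y) j
  rw [pd2, hpd, fderiv_fun_sub ((contDiff_pd hf j).differentiable one_ne_zero x)
    ((contDiff_pd hg j).differentiable one_ne_zero x)]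
  rfl

theorem pd2_const_mul {f : Euc d → ℝ} (hf : ContDiff ℝ 2 f) (c : ℝ) (i j : Fin d) (x : Euc d) :
    pd2 (fun y => c * f y) i j x = c * pd2 f i j x := by
  have hpd : pd (fun y => c * f y) j = fun y => c * pd f j y :=
    funext fun y => pd_const_mul (hf.differentiable two_ne_zero y) c j
  rw [pd2, hpd, fderiv_const_mul ((contDiff_pd hf j).differentiable one_ne_zero x)]
  rfl

end Calculus

section PosSemidef

variable {d : ℕ} {m : Matrix (Fin d) (Fin d) ℝ}

open scoped MatrixOrder in
theorem Matrix.PosSemidef.exists_eq_sum_mul (hm : m.PosSemidef) :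
    ∃ B : Matrix (Fin d) (Fin d) ℝ, ∀ i j, m i j = ∑ k, B k i * B k j := by
  obtain ⟨B, hB⟩ := CStarAlgebra.nonneg_iff_eq_star_mul_self.mp hm.nonneg
  exact ⟨B, fun i j => by simp [hB, Matrix.mul_apply, Matrix.star_apply]⟩

theorem Matrix.PosSemidef.quadForm_nonneg (hm : m.PosSemidef) (ξ : Euc d) :
    0 ≤ quadForm m ξ := by
  calc 0 ≤ star ξ.ofLp ⬝ᵥ m.mulVec ξ.ofLp := hm.dotProduct_mulVec_nonneg _
    _ = quadForm m ξ := by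
      simp only [quadForm, dotProduct, Matrix.mulVec, star_trivial, Finset.mul_sum]
      exact Finset.sum_congr rfl fun i _ => Finset.sum_congr rfl fun j _ => by ring

theorem Matrix.PosSemidef.sum_mul_nonneg (hm : m.PosSemidef) {H : Matrix (Fin d) (Fin d) ℝ}
    (hH : ∀ η : Euc d, 0 ≤ quadForm H η) : 0 ≤ ∑ i, ∑ j, m i j * H i j := by
  obtain ⟨B, hB⟩ := hm.exists_eq_sum_mul
  have hsum : (∑ i, ∑ j, m i j * H i j) = ∑ k, quadForm H (WithLp.toLp 2 (B k)) := by
    simp only [hB, quadForm, Finset.sum_mul]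
    conv_lhs => enter [2, i]; rw [Finset.sum_comm]
    rw [Finset.sum_comm]
    exact Finset.sum_congr rfl fun k _ => Finset.sum_congr rfl fun i _ =>
      Finset.sum_congr rfl fun j _ => by ring
  rw [hsum]
  exact Finset.sum_nonneg fun k _ => hH _

end PosSemidef

section Operator

variable {d : ℕ} {a : Euc d → Matrix (Fin d) (Fin d) ℝ} {b : Euc d → Euc d}

def carreDuChamp (a : Euc d → Matrix (Fin d) (Fin d) ℝ) (f g : Euc d → ℝ) (x : Euc d) : ℝ :=
  ∑ i, ∑ j, a x i j * pd f i x * pd g j x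

theorem carreDuChamp_mul_right {f g h : Euc d → ℝ} {x : Euc d} (hg : DifferentiableAt ℝ g x)
    (hh : DifferentiableAt ℝ h x) :
    carreDuChamp a f (fun y => g y * h y) x =
      g x * carreDuChamp a f h x + h x * carreDuChamp a f g x := by
  simp only [carreDuChamp, pd_mul hg hh, mul_add, Finset.sum_add_distrib, Finset.mul_sum]
  congr 1 <;> exact Finset.sum_congr rfl fun i _ => Finset.sum_congr rfl fun j _ => by ring

theorem carreDuChamp_self_nonneg {x : Euc d} (ha : (a x).PosSemidef) (f : Euc d → ℝ) :
    0 ≤ carreDuChamp a f f x :=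
  ha.quadForm_nonneg (WithLp.toLp 2 fun i => pd f i x)

theorem Lop_mul {f g : Euc d → ℝ} (hf : ContDiff ℝ 2 f) (hg : ContDiff ℝ 2 g) {x : Euc d}
    (hsymm : (a x).IsSymm) :
    Lop a b (fun y => f y * g y) x
      = f x * Lop a b g x + g x * Lop a b f x + 2 * carreDuChamp a f g x := by
  have hswap : (∑ i, ∑ j, a x i j * pd g i x * pd f j x) = carreDuChamp a f g x := by
    rw [Finset.sum_comm]
    exact Finset.sum_congr rfl fun i _ => Finset.sum_congr rfl fun j _ => by
      rw [hsymm.apply]; ring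
  have hsecond : ∀ i j, a x i j * pd2 (fun y => f y * g y) i j x
      = f x * (a x i j * pd2 g i j x) + g x * (a x i j * pd2 f i j x)
        + (a x i j * pd f i x * pd g j x + a x i j * pd g i x * pd f j x) := fun i j => by
    rw [pd2_mul hf hg]; ring
  have hfirst : ∀ i, b x i * pd (fun y => f y * g y) i x
      = f x * (b x i * pd g i x) + g x * (b x i * pd f i x) := fun i => by
    rw [pd_mul (hf.differentiable two_ne_zero x) (hg.differentiable two_ne_zero x)]; ring
  simp only [Lop, hsecond, hfirst, Finset.sum_add_distrib, ← Finset.mul_sum, hswap]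
  unfold carreDuChamp
  ring

theorem Lop_sub {f g : Euc d → ℝ} (hf : ContDiff ℝ 2 f) (hg : ContDiff ℝ 2 g) (x : Euc d) :
    Lop a b (fun y => f y - g y) x = Lop a b f x - Lop a b g x := by
  simp only [Lop, pd2_sub hf hg,
    pd_sub (hf.differentiable two_ne_zero x) (hg.differentiable two_ne_zero x), mul_sub,
    Finset.sum_sub_distrib]
  ring

theorem Lop_const_mul {f : Euc d → ℝ} (hf : ContDiff ℝ 2 f) (c : ℝ) (x : Euc d) :
    Lop a b (fun y => c * f y) x = c * Lop a b f x := by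
  simp only [Lop, pd2_const_mul hf, pd_const_mul (hf.differentiable two_ne_zero x),
    mul_add, Finset.mul_sum]
  congr 1 <;> refine Finset.sum_congr rfl fun i _ => ?_
  · exact Finset.sum_congr rfl fun j _ => by ring
  · ring

theorem Lop_mul_self_mul {φ u : Euc d → ℝ} (hφ : ContDiff ℝ 2 φ) (hu : ContDiff ℝ 2 u)
    {x : Euc d} (hsymm : (a x).IsSymm) :
    Lop a b (fun y => φ y * (φ y * u y)) x
      = 2 * φ x * Lop a b (fun y => φ y * u y) x - φ x ^ 2 * Lop a b u x
        + 2 * u x * carreDuChamp a φ φ x := by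
  have hφx := hφ.differentiable two_ne_zero x
  have hux := hu.differentiable two_ne_zero x
  rw [Lop_mul hφ (hφ.mul hu) hsymm, Lop_mul hφ hu hsymm, carreDuChamp_mul_right hφx hux]
  ring

theorem two_mul_le_Lop_mul_self_mul {W φ u : Euc d → ℝ} {μ : ℝ} (hφ : ContDiff ℝ 2 φ)
    (hu : ContDiff ℝ 2 u) {x : Euc d} (hsymm : (a x).IsSymm) (hpsd : (a x).PosSemidef)
    (hu_nonneg : 0 ≤ u x) (hu_eq : Lop a b u x + W x * u x = 0)
    (hφu_eq : Lop a b (fun y => φ y * u y) x + W x * (φ x * u x) = μ * (φ x * u x)) :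
    2 * μ * (φ x * (φ x * u x)) ≤
      Lop a b (fun y => φ y * (φ y * u y)) x + W x * (φ x * (φ x * u x)) := by
  have hΓ := mul_nonneg hu_nonneg (carreDuChamp_self_nonneg hpsd φ)
  rw [Lop_mul_self_mul hφ hu hsymm]
  linear_combination -2 * φ x * hφu_eq + φ x ^ 2 * hu_eq + 2 * hΓ

end Operator


section SecondDerivativeTest

theorem deriv_deriv_nonneg_of_isLocalMin {g : ℝ → ℝ} {t : ℝ} (hg : ContinuousAt g t)
    (hmin : IsLocalMin g t) : 0 ≤ deriv (deriv g) t := by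
  by_contra! hneg
  have hmax := isLocalMax_of_deriv_deriv_neg hneg hmin.deriv_eq_zero hg
  have hconst : g =ᶠ[𝓝 t] fun _ => g t := by
    filter_upwards [hmin, hmax] with s hs₁ hs₂ using le_antisymm hs₂ hs₁
  have : deriv (deriv g) t = 0 := by
    rw [hconst.deriv.deriv_eq]
    simp
  exact hneg.ne this

variable {d : ℕ}

theorem deriv_comp_add_smul {f : Euc d → ℝ} {x η : Euc d} {t : ℝ}
    (hf : DifferentiableAt ℝ f (x + t • η)) :
    deriv (fun s : ℝ => f (x + s • η)) t = fderiv ℝ f (x + t • η) η := by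
  have hline : HasDerivAt (fun s : ℝ => x + s • η) η t := by
    simpa using ((hasDerivAt_id t).smul_const η).const_add x
  exact (hf.hasFDerivAt.comp_hasDerivAt t hline).deriv

theorem deriv_deriv_comp_add_smul {u : Euc d → ℝ} (hu : ContDiff ℝ 2 u) (x η : Euc d) :
    deriv (deriv fun t : ℝ => u (x + t • η)) 0 =
      quadForm (Matrix.of fun i j => pd2 u i j x) η := by
  have hpd : ∀ j, Differentiable ℝ (pd u j) := fun j =>
    (contDiff_pd hu j).differentiable one_ne_zero
  have hfirst : deriv (fun t : ℝ => u (x + t • η)) = fun t => ∑ j, η j * pd u j (x + t • η) := by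
    funext t
    rw [deriv_comp_add_smul (hu.differentiable two_ne_zero _), fderiv_apply_eq_sum]
    rfl
  have hsecond : ∀ j, deriv (fun t : ℝ => pd u j (x + t • η)) 0 = ∑ i, η i * pd2 u i j x := by
    intro j
    rw [deriv_comp_add_smul (by simpa using hpd j x), fderiv_apply_eq_sum]
    simp [pd2]
  have hdiff : ∀ j, DifferentiableAt ℝ (fun t : ℝ => pd u j (x + t • η)) 0 := fun j => by
    have := hpd j
    fun_prop
  rw [hfirst, deriv_fun_sum fun j _ => (hdiff j).const_mul _]
  simp only [quadForm, Matrix.of_apply]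
  rw [Finset.sum_comm]
  refine Finset.sum_congr rfl fun j _ => ?_
  rw [deriv_const_mul _ (hdiff j), hsecond, Finset.mul_sum]
  exact Finset.sum_congr rfl fun i _ => by ring

theorem Lop_nonneg_of_isLocalMin {a : Euc d → Matrix (Fin d) (Fin d) ℝ} {b : Euc d → Euc d}
    {u : Euc d → ℝ} {x : Euc d} (hu : ContDiff ℝ 2 u) (hmin : IsLocalMin u x)
    (ha : (a x).PosSemidef) : 0 ≤ Lop a b u x := by
  have hgrad : ∀ i, pd u i x = 0 := fun i => by simp [pd, hmin.fderiv_eq_zero]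
  have hhess : ∀ η : Euc d, 0 ≤ quadForm (Matrix.of fun i j => pd2 u i j x) η := fun η => by
    rw [← deriv_deriv_comp_add_smul hu]
    have hline : Continuous fun t : ℝ => x + t • η := by fun_prop
    refine deriv_deriv_nonneg_of_isLocalMin (hu.continuous.comp hline).continuousAt ?_
    exact IsLocalMin.comp_continuous (g := fun t : ℝ => x + t • η) (b := 0)
      (by simpa using hmin) hline.continuousAt
  simpa [Lop, hgrad] using ha.sum_mul_nonneg hhess

end SecondDerivativeTest

section GroundState

variable {d : ℕ} {a : Euc d → Matrix (Fin d) (Fin d) ℝ} {b : Euc d → Euc d} {W u : Euc d → ℝ}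

theorem IsGroundState.pos (hu : IsGroundState a b W u univ) (x : Euc d) : 0 < u x :=
  hu.1 x (mem_univ x)

theorem IsGroundState.contDiff (hu : IsGroundState a b W u univ) : ContDiff ℝ 2 u :=
  contDiffOn_univ.mp hu.2.1

theorem IsGroundState.Lop_add_mul_eq_zero (hu : IsGroundState a b W u univ) (x : Euc d) :
    Lop a b u x + W x * u x = 0 :=
  hu.2.2.1 x (mem_univ x)

theorem IsGroundState.exists_pos_mul_le (hu : IsGroundState a b W u univ) {v : Euc d → ℝ}
    (hv : ContDiff ℝ 2 v) (hvpos : ∀ x, 0 < v x) (hsuper : ∀ x, Lop a b v x + W x * v x ≤ 0) :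
    ∃ ε > 0, ∀ x, ε * u x ≤ v x := by
  obtain ⟨K, hK, -, -, κ, hκ, hκle⟩ := hu.2.2.2 ∅ isCompact_empty (empty_subset _) v
    hv.contDiffOn (fun x _ => hvpos x) (fun x _ => hsuper x)
  have hcont : Continuous fun x => v x / u x :=
    hv.continuous.div hu.contDiff.continuous fun x => (hu.pos x).ne'
  -- `K` may be empty; adjoining a point lets `v / u` attain a minimum
  obtain ⟨x₀, -, hx₀⟩ := (hK.insert 0).exists_isMinOn (insert_nonempty _ _) hcont.continuousOn
  refine ⟨min κ (v x₀ / u x₀), lt_min hκ (div_pos (hvpos x₀) (hu.pos x₀)), fun x => ?_⟩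
  by_cases hx : x ∈ K
  · have : v x₀ / u x₀ ≤ v x / u x := hx₀ (mem_insert_of_mem _ hx)
    exact (mul_le_mul_of_nonneg_right (min_le_right _ _) (hu.pos x).le).trans
      ((le_div_iff₀ (hu.pos x)).1 this)
  · exact (mul_le_mul_of_nonneg_right (min_le_left _ _) (hu.pos x).le).trans
      (hκle x ⟨mem_univ x, hx⟩)

theorem IsGroundState.eq_zero_of_subsolution (hu : IsGroundState a b W u univ)
    (ha : ∀ x, (a x).PosSemidef) {ψ : Euc d → ℝ} {c : ℝ} (hc : 0 < c) (hψ : ContDiff ℝ 2 ψ)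
    (hψ_nonneg : ∀ x, 0 ≤ ψ x) (hψ_le : ∃ κ, ∀ x, ψ x ≤ κ * u x)
    (hsub : ∀ x, c * ψ x ≤ Lop a b ψ x + W x * ψ x) : ∀ x, ψ x = 0 := by
  obtain ⟨κ, hκ⟩ := hψ_le
  have hupos := hu.pos
  have huC2 := hu.contDiff
  have hbdd : BddAbove (range fun x => ψ x / u x) := ⟨κ, by
    rintro _ ⟨x, rfl⟩
    exact (div_le_iff₀ (hupos x)).2 (hκ x)⟩
  set M := ⨆ x, ψ x / u x
  have hle : ∀ x, ψ x ≤ M * u x := fun x => (div_le_iff₀ (hupos x)).1 (le_ciSup hbdd x)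
  set v := fun x => M * u x - ψ x
  have hv : ContDiff ℝ 2 v := (contDiff_const.mul huC2).sub hψ
  have hsuper : ∀ x, Lop a b v x + W x * v x ≤ -(c * ψ x) := fun x => by
    rw [Lop_sub (contDiff_const.mul huC2) hψ, Lop_const_mul huC2]
    linear_combination M * hu.Lop_add_mul_eq_zero x + hsub x
  -- if `v > 0`, minimal growth of `u` pushes `ψ / u` below `M - ε`
  obtain ⟨x₀, hx₀⟩ : ∃ x₀, v x₀ = 0 := by
    by_contra! hne
    obtain ⟨ε, hε, hεle⟩ := hu.exists_pos_mul_le hv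
      (fun x => (sub_nonneg.2 (hle x)).lt_of_ne' (hne x))
      (fun x => (hsuper x).trans (neg_nonpos.2 (mul_nonneg hc.le (hψ_nonneg x))))
    have : M ≤ M - ε := ciSup_le fun x => (div_le_iff₀ (hupos x)).2 (by linarith [hεle x])
    linarith
  have hmin : IsLocalMin v x₀ := Filter.Eventually.of_forall fun x =>
    hx₀ ▸ sub_nonneg.2 (hle x)
  have hψx₀ : ψ x₀ ≤ 0 := by
    have := Lop_nonneg_of_isLocalMin (b := b) hv hmin (ha x₀)
    have : c * ψ x₀ ≤ 0 := by linarith [hsuper x₀, show W x₀ * v x₀ = 0 by rw [hx₀, mul_zero]]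
    exact nonpos_of_mul_nonpos_right this hc
  have hM : M ≤ 0 := by
    have hMu : M * u x₀ = ψ x₀ := sub_eq_zero.1 hx₀
    nlinarith [hupos x₀]
  intro x
  exact le_antisymm ((hle x).trans (mul_nonpos_of_nonpos_of_nonneg hM (hupos x).le))
    (hψ_nonneg x)

end GroundState

theorem statement10_general {d : ℕ}
    (a : Euc d → Matrix (Fin d) (Fin d) ℝ) (b : Euc d → Euc d)
    (hstand : StandingH a b)
    (V : Euc d → ℝ)
    (Ψ₁ : Euc d → ℝ)
    (hgs₁ : IsGroundState a b (fun x => V x - lamStar a b V Set.univ) Ψ₁ Set.univ) :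
    ∀ lam : ℝ, lamStar a b V Set.univ < lam →
    ∀ Ψ : Euc d → ℝ, ContDiff ℝ 2 Ψ →
      (∀ x, Lop a b Ψ x + V x * Ψ x = lam * Ψ x) →
      (∃ κ > 0, ∀ x, |Ψ x| ≤ κ * Ψ₁ x) →
      ∀ x, Ψ x = 0 := by
  rintro lam hlam Ψ hΨ hΨeq ⟨κ, -, hΨle⟩
  set l := lamStar a b V univ
  have hΨ₁pos := hgs₁.pos
  have hΨ₁C2 := hgs₁.contDiff
  have hpsd : ∀ x, (a x).PosSemidef := fun x => (hstand.posdef x).posSemidef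
  have hsymm : ∀ x, (a x).IsSymm := fun x =>
    Matrix.isHermitian_iff_isSymm.1 (hstand.posdef x).isHermitian
  set φ := fun x => Ψ x / Ψ₁ x
  have hφ : ContDiff ℝ 2 φ := hΨ.div hΨ₁C2 fun x => (hΨ₁pos x).ne'
  have hΨφ : (fun x => φ x * Ψ₁ x) = Ψ := funext fun x => div_mul_cancel₀ _ (hΨ₁pos x).ne'
  have hbound : ∀ x, φ x * (φ x * Ψ₁ x) ≤ κ * κ * Ψ₁ x := fun x => by
    have hφκ : |φ x| ≤ κ := by
      rw [abs_div, abs_of_pos (hΨ₁pos x), div_le_iff₀ (hΨ₁pos x)]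
      exact hΨle x
    calc φ x * (φ x * Ψ₁ x) = |φ x| * |φ x| * Ψ₁ x := by rw [abs_mul_abs_self]; ring
      _ ≤ κ * κ * Ψ₁ x :=
        mul_le_mul_of_nonneg_right (mul_self_le_mul_self (abs_nonneg _) hφκ) (hΨ₁pos x).le
  have hsub : ∀ x, 2 * (lam - l) * (φ x * (φ x * Ψ₁ x)) ≤
      Lop a b (fun y => φ y * (φ y * Ψ₁ y)) x + (V x - l) * (φ x * (φ x * Ψ₁ x)) := fun x => by
    refine two_mul_le_Lop_mul_self_mul (b := b) (W := fun y => V y - l) hφ hΨ₁C2 (hsymm x)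
      (hpsd x) (hΨ₁pos x).le (hgs₁.Lop_add_mul_eq_zero x) ?_
    rw [hΨφ, congrFun hΨφ x]
    linarith [hΨeq x]
  intro x
  have hψx := hgs₁.eq_zero_of_subsolution hpsd
    (by linarith : 0 < 2 * (lam - l)) (hφ.mul (hφ.mul hΨ₁C2))
    (fun x => by rw [← mul_assoc]; exact mul_nonneg (mul_self_nonneg _) (hΨ₁pos x).le)
    ⟨κ * κ, hbound⟩ hsub x
  rw [← hΨφ]
  simpa [(hΨ₁pos x).ne'] using hψx

/-- Corollary following Theorem 2.4: if `𝓛 + V - λ*` is critical with ground state `Ψ₁*`,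
then for `λ > λ*` there is no nonzero solution `Ψ` of `𝓛Ψ + VΨ = λΨ` with
`|Ψ| ≤ κ Ψ₁*`. -/
theorem statement10 {d : ℕ} (hd : 1 ≤ d)
    (a : Euc d → Matrix (Fin d) (Fin d) ℝ) (b : Euc d → Euc d)
    (hstand : StandingH a b)
    (V : Euc d → ℝ) (hVreg : LocallyHolder V)
    (hfin : lamStarFinite a b V Set.univ)
    (Ψ₁ : Euc d → ℝ)
    (hgs₁ : IsGroundState a b (fun x => V x - lamStar a b V Set.univ) Ψ₁ Set.univ) :
    ∀ lam : ℝ, lamStar a b V Set.univ < lam →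
    ∀ Ψ : Euc d → ℝ, ContDiff ℝ 2 Ψ →
      (∀ x, Lop a b Ψ x + V x * Ψ x = lam * Ψ x) →
      (∃ κ > 0, ∀ x, |Ψ x| ≤ κ * Ψ₁ x) →
      ∀ x, Ψ x = 0 :=
  statement10_general a b hstand V Ψ₁ hgs₁
end
end

section
/- Let a : ℝ^d → (symmetric positive definite d×d real matrices) be locally Lipschitz, bounded, with ⟨ξ, a(x)ξ⟩ ≥ η₀|ξ|² for all x, ξ (some η₀ > 0). Let 𝒜₁, 𝒜₂ be compact metric spaces and let b : ℝ^d × 𝒜₁ × 𝒜₂ → ℝ^d and V : ℝ^d × 𝒜₁ × 𝒜₂ → ℝ be continuous and bounded. If u is a positive C² function on ℝ^d satisfying, for every x, min_{v₁∈𝒜₁} max_{v₂∈𝒜₂} [ Σ_{i,j} a^{ij}(x) ∂²u(x)/∂x_i∂x_j + ⟨b(x,v₁,v₂), ∇u(x)⟩ + V(x,v₁,v₂) u(x) ] = 0, then there exist constants γ > 0 and C_γ > 0 such that u(x) ≥ C_γ e^{−γ|x|} for all sufficiently large |x|. -/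
/-!
Since `b` and `V` are bounded, the Isaacs equation forces the one-sided inequality
`∑ aᵢⱼ ∂ᵢⱼu ≤ C_b |∇u| + C_V u`. Let `m` be the minimum of `u` on the unit ball and compare `u`,
on the annulus `1 ≤ |x| ≤ ρ`, with the barrier `w = m (e^{-γ√(1+|x|²)} - e^{-γ√(1+ρ²)})`.
Then `w ≤ u` on both boundary spheres, and for `γ` large, ellipticity gives the reverse strict
inequality `∑ aᵢⱼ ∂ᵢⱼw > C_b |∇w| + C_V w`. At an interior negative minimum of `u - w` we
would have `∇u = ∇w`, `D²u ≥ D²w` and `u < w`, which is incompatible with these two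
inequalities. Taking `ρ = |x| + 2` gives the exponential lower bound.
-/

open Metric Set Filter

noncomputable section

open scoped Topology

theorem IsLocalMin.deriv_deriv_nonneg {f : ℝ → ℝ} {x₀ : ℝ} (h : IsLocalMin f x₀)
    (hc : ContinuousAt f x₀) : 0 ≤ deriv (deriv f) x₀ := by
  by_contra! hneg
  -- the second-derivative test makes `x₀` a local maximum too, so `f` is locally constant
  have hconst : f =ᶠ[𝓝 x₀] fun _ => f x₀ := by
    filter_upwards [h, isLocalMax_of_deriv_deriv_neg hneg h.deriv_eq_zero hc] with y h₁ h₂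
    exact le_antisymm h₂ h₁
  have : deriv (deriv f) x₀ = 0 := by
    rw [hconst.deriv.deriv_eq]
    simp
  exact hneg.ne this

theorem IsLocalMin.fderiv_fderiv_apply_self_nonneg {E : Type*} [NormedAddCommGroup E]
    [NormedSpace ℝ E] {v : E → ℝ} {x₀ : E} (h : IsLocalMin v x₀) (hv : ContDiff ℝ 2 v)
    (ξ : E) : 0 ≤ fderiv ℝ (fderiv ℝ v) x₀ ξ ξ := by
  set ℓ : ℝ → E := fun t => x₀ + t • ξ
  have hℓ : ∀ t, HasDerivAt ℓ ξ t := fun t => by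
    simpa [ℓ] using ((hasDerivAt_id t).smul_const ξ).const_add x₀
  have hℓ0 : ℓ 0 = x₀ := by simp [ℓ]
  have hfst : deriv (v ∘ ℓ) = fun t => fderiv ℝ v (ℓ t) ξ := funext fun t =>
    ((hv.differentiable two_ne_zero (ℓ t)).hasFDerivAt.comp_hasDerivAt t (hℓ t)).deriv
  have hsnd : HasDerivAt (fun t => fderiv ℝ v (ℓ t) ξ) (fderiv ℝ (fderiv ℝ v) x₀ ξ ξ) 0 := by
    have hD : HasFDerivAt (fderiv ℝ v) (fderiv ℝ (fderiv ℝ v) x₀) (ℓ 0) := by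
      rw [hℓ0]
      exact ((hv.fderiv_right le_rfl).differentiable one_ne_zero x₀).hasFDerivAt
    exact (ContinuousLinearMap.apply ℝ ℝ ξ).hasFDerivAt.comp_hasDerivAt 0
      (hD.comp_hasDerivAt 0 (hℓ 0))
  have hmin : IsLocalMin (v ∘ ℓ) 0 := by
    rw [← hℓ0] at h
    exact h.comp_continuous (hℓ 0).continuousAt
  have := hmin.deriv_deriv_nonneg (hv.continuous.continuousAt.comp (hℓ 0).continuousAt)
  rwa [hfst, hsnd.deriv] at this

theorem Matrix.PosSemidef.sum_sum_mul_nonneg {n : Type*} [Fintype n] {A H : Matrix n n ℝ}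
    (hA : A.PosSemidef) (hH : H.PosSemidef) : 0 ≤ ∑ i, ∑ j, A i j * H i j := by
  have := (hA.hadamard hH).dotProduct_mulVec_nonneg (fun _ => 1)
  simp only [star_trivial, dotProduct, Matrix.mulVec, Matrix.hadamard_apply] at this
  simpa using this

variable {d : ℕ}

theorem sum_smul_single_eq (ξ : Euc d) : ∑ i, ξ i • EuclideanSpace.single i (1 : ℝ) = ξ := by
  simpa using (EuclideanSpace.basisFun (Fin d) ℝ).sum_repr ξ

theorem apply_eq_sum_mul_single (L : Euc d →L[ℝ] ℝ) (ξ : Euc d) :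
    L ξ = ∑ i, ξ i * L (EuclideanSpace.single i 1) := by
  conv_lhs => rw [← sum_smul_single_eq ξ]
  simp [map_sum]

theorem pd2_eq_fderiv_fderiv {v : Euc d → ℝ} {x : Euc d}
    (hv : DifferentiableAt ℝ (fderiv ℝ v) x) (i j : Fin d) :
    pd2 v i j x = fderiv ℝ (fderiv ℝ v) x (EuclideanSpace.single i 1)
      (EuclideanSpace.single j 1) := by
  unfold pd2 pd
  rw [fderiv_clm_apply hv (differentiableAt_const _)]
  simp

theorem IsLocalMin.posSemidef_hessian {v : Euc d → ℝ} {x₀ : Euc d} (h : IsLocalMin v x₀)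
    (hv : ContDiff ℝ 2 v) : (Matrix.of fun i j => pd2 v i j x₀).PosSemidef := by
  have hD : DifferentiableAt ℝ (fderiv ℝ v) x₀ :=
    (hv.fderiv_right le_rfl).differentiable one_ne_zero x₀
  refine .of_dotProduct_mulVec_nonneg ?_ fun x => ?_
  · ext i j
    simp only [Matrix.conjTranspose_apply, Matrix.of_apply, star_trivial,
      pd2_eq_fderiv_fderiv hD]
    exact hv.contDiffAt.isSymmSndFDerivAt (by simp) _ _
  · have := h.fderiv_fderiv_apply_self_nonneg hv (WithLp.toLp 2 x)
    simp only [← sum_smul_single_eq (WithLp.toLp 2 x), map_sum, map_smul, sum_apply,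
      smul_apply, smul_eq_mul] at this
    refine this.trans_eq ?_
    simp only [star_trivial, dotProduct, Matrix.mulVec, Matrix.of_apply, pd2_eq_fderiv_fderiv hD,
      Finset.mul_sum]
    rw [Finset.sum_comm]
    exact Finset.sum_congr rfl fun i _ => Finset.sum_congr rfl fun j _ => by ring

theorem IsLocalMin.fderiv_eq_of_sub {u w : Euc d → ℝ} {x₀ : Euc d} (h : IsLocalMin (u - w) x₀)
    (hu : DifferentiableAt ℝ u x₀) (hw : DifferentiableAt ℝ w x₀) :
    fderiv ℝ u x₀ = fderiv ℝ w x₀ := by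
  have := h.fderiv_eq_zero
  rwa [fderiv_sub hu hw, sub_eq_zero] at this

theorem IsLocalMin.sum_mul_pd2_le_of_sub {u w : Euc d → ℝ} {x₀ : Euc d}
    (h : IsLocalMin (u - w) x₀) (hu : ContDiff ℝ 2 u) (hw : ContDiff ℝ 2 w)
    {A : Matrix (Fin d) (Fin d) ℝ} (hA : A.PosSemidef) :
    ∑ i, ∑ j, A i j * pd2 w i j x₀ ≤ ∑ i, ∑ j, A i j * pd2 u i j x₀ := by
  have hD : ∀ f : Euc d → ℝ, ContDiff ℝ 2 f → DifferentiableAt ℝ (fderiv ℝ f) x₀ :=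
    fun f hf => (hf.fderiv_right le_rfl).differentiable one_ne_zero x₀
  have huw : ContDiff ℝ 2 (u - w) := hu.sub hw
  have hsub : fderiv ℝ (u - w) = fderiv ℝ u - fderiv ℝ w := funext fun x =>
    fderiv_sub (hu.differentiable two_ne_zero x) (hw.differentiable two_ne_zero x)
  have hpd2 : ∀ i j, pd2 (u - w) i j x₀ = pd2 u i j x₀ - pd2 w i j x₀ := fun i j => by
    rw [pd2_eq_fderiv_fderiv (hD _ huw), pd2_eq_fderiv_fderiv (hD _ hu),
      pd2_eq_fderiv_fderiv (hD _ hw), hsub, fderiv_sub (hD _ hu) (hD _ hw)]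
    rfl
  have := hA.sum_sum_mul_nonneg (h.posSemidef_hessian huw)
  simp only [Matrix.of_apply, hpd2, mul_sub, Finset.sum_sub_distrib] at this
  linarith

section Radial

variable {g g' g'' : ℝ → ℝ}

theorem hasFDerivAt_comp_norm_sq (hg : ∀ t, 0 ≤ t → HasDerivAt g (g' t) t) (x : Euc d) :
    HasFDerivAt (fun y : Euc d => g (‖y‖ ^ 2)) (g' (‖x‖ ^ 2) • (2 : ℕ) • innerSL ℝ x) x :=
  (hg _ (sq_nonneg _)).comp_hasFDerivAt x (hasStrictFDerivAt_norm_sq x).hasFDerivAt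

theorem norm_fderiv_comp_norm_sq (hg : ∀ t, 0 ≤ t → HasDerivAt g (g' t) t) (x : Euc d) :
    ‖fderiv ℝ (fun y : Euc d => g (‖y‖ ^ 2)) x‖ = |g' (‖x‖ ^ 2)| * (2 * ‖x‖) := by
  rw [(hasFDerivAt_comp_norm_sq hg x).fderiv, ← Nat.cast_smul_eq_nsmul ℝ, norm_smul, norm_smul,
    innerSL_apply_norm]
  simp

theorem pd_comp_norm_sq (hg : ∀ t, 0 ≤ t → HasDerivAt g (g' t) t) (j : Fin d) (x : Euc d) :
    pd (fun y : Euc d => g (‖y‖ ^ 2)) j x = g' (‖x‖ ^ 2) * (2 * x j) := by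
  rw [pd, (hasFDerivAt_comp_norm_sq hg x).fderiv]
  simp [EuclideanSpace.inner_single_right]

theorem pd2_comp_norm_sq (hg : ∀ t, 0 ≤ t → HasDerivAt g (g' t) t)
    (hg' : ∀ t, 0 ≤ t → HasDerivAt g' (g'' t) t) (i j : Fin d) (x : Euc d) :
    pd2 (fun y : Euc d => g (‖y‖ ^ 2)) i j x =
      4 * g'' (‖x‖ ^ 2) * x i * x j + 2 * g' (‖x‖ ^ 2) * if i = j then 1 else 0 := by
  have hcoord : HasFDerivAt (fun y : Euc d => 2 * y j)
      ((2 : ℝ) • EuclideanSpace.proj (𝕜 := ℝ) j) x := by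
    simpa using ((EuclideanSpace.proj (𝕜 := ℝ) j).hasFDerivAt (x := x)).const_mul (2 : ℝ)
  rw [pd2, funext (pd_comp_norm_sq hg j),
    ((hasFDerivAt_comp_norm_sq hg' x).fun_mul hcoord).fderiv]
  simp [EuclideanSpace.inner_single_right, PiLp.single_apply, eq_comm]
  split_ifs <;> ring

theorem sum_mul_pd2_comp_norm_sq (hg : ∀ t, 0 ≤ t → HasDerivAt g (g' t) t)
    (hg' : ∀ t, 0 ≤ t → HasDerivAt g' (g'' t) t) (A : Matrix (Fin d) (Fin d) ℝ) (x : Euc d) :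
    ∑ i, ∑ j, A i j * pd2 (fun y : Euc d => g (‖y‖ ^ 2)) i j x =
      4 * g'' (‖x‖ ^ 2) * quadForm A x + 2 * g' (‖x‖ ^ 2) * A.trace := by
  simp only [pd2_comp_norm_sq hg hg', mul_add, Finset.sum_add_distrib, quadForm,
    Matrix.trace, Matrix.diag, Finset.mul_sum]
  congr 1
  · exact Finset.sum_congr rfl fun i _ => Finset.sum_congr rfl fun j _ => by ring
  · simp [mul_comm]

end Radial

theorem hasDerivAt_sqrt_one_add {t : ℝ} (ht : -1 < t) :
    HasDerivAt (fun t => √(1 + t)) (1 / (2 * √(1 + t))) t := by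
  simpa using ((hasDerivAt_id' t).const_add 1).sqrt (by linarith)

def barrierProfile (γ t : ℝ) : ℝ := Real.exp (-(γ * √(1 + t)))

namespace barrierProfile

variable {γ : ℝ}

theorem pos (γ t : ℝ) : 0 < barrierProfile γ t := Real.exp_pos _

theorem le_one (hγ : 0 ≤ γ) (t : ℝ) : barrierProfile γ t ≤ 1 :=
  Real.exp_le_one_iff.2 (neg_nonpos.2 (mul_nonneg hγ (Real.sqrt_nonneg _)))

theorem hasDerivAt {t : ℝ} (ht : -1 < t) :
    HasDerivAt (barrierProfile γ) (-(γ / (2 * √(1 + t))) * barrierProfile γ t) t := by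
  refine (((hasDerivAt_sqrt_one_add ht).const_mul γ).neg).exp.congr_deriv ?_
  simp only [barrierProfile, Pi.neg_apply]
  ring

theorem hasDerivAt_deriv {t : ℝ} (ht : -1 < t) :
    HasDerivAt (fun t => -(γ / (2 * √(1 + t))) * barrierProfile γ t)
      ((γ / (4 * (1 + t) * √(1 + t)) + γ ^ 2 / (4 * (1 + t))) * barrierProfile γ t) t := by
  have hs : 0 < √(1 + t) := Real.sqrt_pos.2 (by linarith)
  have hcoef := (((hasDerivAt_const t γ).div ((hasDerivAt_sqrt_one_add ht).const_mul 2)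
    (by positivity)).neg)
  refine (hcoef.mul (hasDerivAt ht)).congr_deriv ?_
  have h1t : 1 + t = √(1 + t) ^ 2 := (Real.sq_sqrt (by linarith)).symm
  simp only [Pi.neg_apply, Pi.div_apply]
  set s := √(1 + t)
  rw [h1t]
  field_simp
  ring

theorem contDiff_comp_norm_sq (γ : ℝ) :
    ContDiff ℝ 2 fun y : Euc d => barrierProfile γ (‖y‖ ^ 2) :=
  (((contDiff_const.add (contDiff_norm_sq ℝ)).sqrt fun y => by positivity).const_smul γ).neg.exp

end barrierProfile

/-- The right-hand side is `(4 g'' Q + 2 g' T) / g` at `t` for `g = barrierProfile γ`. -/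
theorem le_barrier_coeff {t Q T τ η₀ γ : ℝ} (ht : 1 ≤ t) (hη : 0 ≤ η₀) (hQ : η₀ * t ≤ Q)
    (hT : |T| ≤ τ) (hγ : 0 ≤ γ) :
    γ ^ 2 * η₀ / 2 - γ * τ ≤
      4 * (γ / (4 * (1 + t) * √(1 + t)) + γ ^ 2 / (4 * (1 + t))) * Q +
        2 * (-(γ / (2 * √(1 + t)))) * T := by
  have hs : 1 ≤ √(1 + t) := Real.one_le_sqrt.2 (by linarith)
  have hQ0 : 0 ≤ Q := le_trans (by positivity) hQ
  have hsmall : 0 ≤ γ / (4 * (1 + t) * √(1 + t)) * Q := by positivity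
  have hmain : γ ^ 2 * η₀ / 2 ≤ γ ^ 2 / (1 + t) * Q := by
    rw [div_mul_eq_mul_div, le_div_iff₀ (by linarith)]
    nlinarith [mul_le_mul_of_nonneg_left hQ (sq_nonneg γ), sq_nonneg γ, mul_nonneg (sq_nonneg γ) hη]
  have htrace : γ / √(1 + t) * T ≤ γ * τ := by
    rw [div_mul_eq_mul_div, div_le_iff₀ (by linarith)]
    nlinarith [mul_le_mul_of_nonneg_left ((le_abs_self T).trans hT) hγ,
      mul_nonneg (mul_nonneg hγ ((abs_nonneg T).trans hT)) (sub_nonneg.2 hs)]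
  have : 4 * (γ / (4 * (1 + t) * √(1 + t)) + γ ^ 2 / (4 * (1 + t))) * Q +
      2 * (-(γ / (2 * √(1 + t)))) * T =
      4 * (γ / (4 * (1 + t) * √(1 + t)) * Q) + γ ^ 2 / (1 + t) * Q - γ / √(1 + t) * T := by
    field_simp
    ring
  linarith

def barrier (γ m β : ℝ) (y : Euc d) : ℝ := m * (barrierProfile γ (‖y‖ ^ 2) - β)

namespace barrier

variable {γ m β : ℝ}

theorem contDiff : ContDiff ℝ 2 (barrier (d := d) γ m β) :=
  contDiff_const.mul ((barrierProfile.contDiff_comp_norm_sq γ).sub contDiff_const)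

theorem hasDerivAt_profile {t : ℝ} (ht : 0 ≤ t) :
    HasDerivAt (fun t => m * (barrierProfile γ t - β))
      (m * (-(γ / (2 * √(1 + t))) * barrierProfile γ t)) t :=
  ((barrierProfile.hasDerivAt (by linarith)).sub_const β).const_mul m

theorem hasDerivAt_profile_deriv {t : ℝ} (ht : 0 ≤ t) :
    HasDerivAt (fun t => m * (-(γ / (2 * √(1 + t))) * barrierProfile γ t))
      (m * ((γ / (4 * (1 + t) * √(1 + t)) + γ ^ 2 / (4 * (1 + t))) * barrierProfile γ t)) t :=
  (barrierProfile.hasDerivAt_deriv (by linarith)).const_mul m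

theorem norm_fderiv_le (hγ : 0 ≤ γ) (hm : 0 ≤ m) (x : Euc d) :
    ‖fderiv ℝ (barrier γ m β) x‖ ≤ m * γ * barrierProfile γ (‖x‖ ^ 2) := by
  have hs : ‖x‖ ≤ √(1 + ‖x‖ ^ 2) := Real.le_sqrt_of_sq_le (by linarith)
  have hs0 : 0 < √(1 + ‖x‖ ^ 2) := Real.sqrt_pos.2 (by positivity)
  have hP := barrierProfile.pos γ (‖x‖ ^ 2)
  unfold barrier
  rw [norm_fderiv_comp_norm_sq (fun t ht => hasDerivAt_profile ht), abs_mul, abs_mul,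
    abs_neg, abs_of_nonneg hm, abs_of_nonneg (by positivity), abs_of_pos hP]
  calc m * (γ / (2 * √(1 + ‖x‖ ^ 2)) * barrierProfile γ (‖x‖ ^ 2)) * (2 * ‖x‖)
      = m * γ * barrierProfile γ (‖x‖ ^ 2) * (‖x‖ / √(1 + ‖x‖ ^ 2)) := by
        field_simp
    _ ≤ m * γ * barrierProfile γ (‖x‖ ^ 2) * 1 := by
        gcongr
        exact (div_le_one hs0).2 hs
    _ = m * γ * barrierProfile γ (‖x‖ ^ 2) := mul_one _

theorem le_sum_mul_pd2 {η₀ τ : ℝ} {A : Matrix (Fin d) (Fin d) ℝ} {x : Euc d} (hγ : 0 ≤ γ)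
    (hm : 0 ≤ m) (hη : 0 ≤ η₀) (hx : 1 ≤ ‖x‖) (hA : η₀ * ‖x‖ ^ 2 ≤ quadForm A x)
    (htr : |A.trace| ≤ τ) :
    m * (γ ^ 2 * η₀ / 2 - γ * τ) * barrierProfile γ (‖x‖ ^ 2) ≤
      ∑ i, ∑ j, A i j * pd2 (barrier γ m β) i j x := by
  have hcoeff := le_barrier_coeff (by nlinarith) hη hA htr hγ
  have hmP : 0 ≤ m * barrierProfile γ (‖x‖ ^ 2) := mul_nonneg hm (barrierProfile.pos _ _).le
  unfold barrier
  rw [sum_mul_pd2_comp_norm_sq (fun t ht => hasDerivAt_profile ht)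
    (fun t ht => hasDerivAt_profile_deriv ht)]
  nlinarith [mul_le_mul_of_nonneg_left hcoeff hmP]

end barrier

theorem isLocalMin_of_isMinOn_annulus {v : Euc d → ℝ} {ρ : ℝ} {x₀ : Euc d}
    (h : IsMinOn v (closedBall 0 ρ \ ball 0 1) x₀) (h₁ : 1 < ‖x₀‖) (hρ : ‖x₀‖ < ρ) :
    IsLocalMin v x₀ := by
  refine h.isLocalMin (mem_of_superset ((isOpen_ball.sdiff isClosed_closedBall).mem_nhds ?_)
    (sdiff_subset_sdiff ball_subset_closedBall ball_subset_closedBall))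
  simpa using ⟨hρ, h₁⟩

section Comparison

variable {a : Euc d → Matrix (Fin d) (Fin d) ℝ} {η₀ τ Cb CV γ m : ℝ} {u : Euc d → ℝ}

theorem not_isLocalMin_sub_barrier (ha : ∀ x, (a x).PosSemidef) (hη : 0 ≤ η₀)
    (hellip : ∀ x ξ, η₀ * ‖ξ‖ ^ 2 ≤ quadForm (a x) ξ) (htr : ∀ x, |(a x).trace| ≤ τ)
    (hu : ContDiff ℝ 2 u)
    (hsub : ∀ x, ∑ i, ∑ j, a x i j * pd2 u i j x ≤ Cb * ‖fderiv ℝ u x‖ + CV * u x)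
    (hCb : 0 ≤ Cb) (hCV : 0 ≤ CV) (hm : 0 < m) (hγ : 0 ≤ γ)
    (hγlarge : Cb * γ + CV < γ ^ 2 * η₀ / 2 - γ * τ) {β : ℝ} (hβ : 0 ≤ β) {x₀ : Euc d}
    (hx₀ : 1 ≤ ‖x₀‖) (hmin : IsLocalMin (u - barrier γ m β) x₀)
    (hlt : u x₀ < barrier γ m β x₀) : False := by
  set P := barrierProfile γ (‖x₀‖ ^ 2)
  have hP : 0 < P := barrierProfile.pos _ _
  have hgrad : ‖fderiv ℝ u x₀‖ ≤ m * γ * P := by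
    rw [hmin.fderiv_eq_of_sub (hu.differentiable two_ne_zero x₀)
      (barrier.contDiff.differentiable two_ne_zero x₀)]
    exact barrier.norm_fderiv_le hγ hm.le x₀
  have hval : u x₀ ≤ m * P := by
    have : barrier γ m β x₀ ≤ m * P := by
      simp only [barrier]
      nlinarith
    linarith
  have hlow : m * (γ ^ 2 * η₀ / 2 - γ * τ) * P ≤ Cb * (m * γ * P) + CV * (m * P) :=
    calc m * (γ ^ 2 * η₀ / 2 - γ * τ) * P
        ≤ ∑ i, ∑ j, a x₀ i j * pd2 (barrier γ m β) i j x₀ :=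
          barrier.le_sum_mul_pd2 hγ hm.le hη hx₀ (hellip x₀ x₀) (htr x₀)
      _ ≤ ∑ i, ∑ j, a x₀ i j * pd2 u i j x₀ :=
          hmin.sum_mul_pd2_le_of_sub hu barrier.contDiff (ha x₀)
      _ ≤ Cb * ‖fderiv ℝ u x₀‖ + CV * u x₀ := hsub x₀
      _ ≤ Cb * (m * γ * P) + CV * (m * P) := by gcongr
  have hmP : 0 < m * P := mul_pos hm hP
  nlinarith

theorem barrier_le_of_subsolution (ha : ∀ x, (a x).PosSemidef) (hη : 0 ≤ η₀)
    (hellip : ∀ x ξ, η₀ * ‖ξ‖ ^ 2 ≤ quadForm (a x) ξ) (htr : ∀ x, |(a x).trace| ≤ τ)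
    (hu : ContDiff ℝ 2 u) (hu₀ : ∀ x, 0 ≤ u x)
    (hsub : ∀ x, ∑ i, ∑ j, a x i j * pd2 u i j x ≤ Cb * ‖fderiv ℝ u x‖ + CV * u x)
    (hCb : 0 ≤ Cb) (hCV : 0 ≤ CV) (hm : 0 < m) (hmu : ∀ x, ‖x‖ = 1 → m ≤ u x) (hγ : 0 ≤ γ)
    (hγlarge : Cb * γ + CV < γ ^ 2 * η₀ / 2 - γ * τ) {ρ : ℝ} {z : Euc d} (hz₁ : 1 ≤ ‖z‖)
    (hzρ : ‖z‖ ≤ ρ) : barrier γ m (barrierProfile γ (ρ ^ 2)) z ≤ u z := by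
  set β := barrierProfile γ (ρ ^ 2)
  set w := barrier γ m β
  have hw : ContDiff ℝ 2 w := barrier.contDiff
  have hzK : z ∈ closedBall 0 ρ \ ball 0 1 := by simpa using ⟨hzρ, hz₁⟩
  obtain ⟨x₀, hx₀K, hmin⟩ := ((isCompact_closedBall 0 ρ).diff isOpen_ball).exists_isMinOn
    ⟨z, hzK⟩ (hu.continuous.sub hw.continuous).continuousOn
  suffices 0 ≤ u x₀ - w x₀ by
    have : u x₀ - w x₀ ≤ u z - w z := hmin hzK
    linarith
  by_contra! hneg
  simp only [Set.mem_sdiff, mem_closedBall, dist_zero_right, mem_ball, not_lt] at hx₀K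
  have h₁ : 1 < ‖x₀‖ := by
    refine hx₀K.2.lt_of_ne fun h => ?_
    have : w x₀ < m := by
      simp only [w, barrier]
      nlinarith [barrierProfile.le_one hγ (‖x₀‖ ^ 2), barrierProfile.pos γ (ρ ^ 2)]
    linarith [hmu x₀ h.symm]
  have hρ : ‖x₀‖ < ρ := by
    refine hx₀K.1.lt_of_ne fun h => ?_
    have : w x₀ = 0 := by simp [w, barrier, β, h]
    linarith [hu₀ x₀]
  exact not_isLocalMin_sub_barrier ha hη hellip htr hu hsub hCb hCV hm hγ hγlarge
    (barrierProfile.pos γ _).le h₁.le (isLocalMin_of_isMinOn_annulus hmin h₁ hρ) (by linarith)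

end Comparison

theorem le_ciInf_ciSup {α ι κ : Type*} [ConditionallyCompleteLattice α] [Nonempty ι]
    [Nonempty κ] {F : ι → κ → α} {c C : α} (hlow : ∀ i k, c ≤ F i k) (hup : ∀ i k, F i k ≤ C) :
    c ≤ ⨅ i, ⨆ k, F i k :=
  le_ciInf fun i => (hlow i (Classical.arbitrary κ)).trans
    (le_ciSup ⟨C, by rintro _ ⟨k, rfl⟩; exact hup i k⟩ _)

theorem sum_mul_pd2_le_of_iInf_iSup_eq_zero {A₁ A₂ : Type*} [Nonempty A₁] [Nonempty A₂]
    {a : Euc d → Matrix (Fin d) (Fin d) ℝ} {b : Euc d → A₁ → A₂ → Euc d}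
    {V : Euc d → A₁ → A₂ → ℝ} {u : Euc d → ℝ} {Cb CV : ℝ} (hb : ∀ x v₁ v₂, ‖b x v₁ v₂‖ ≤ Cb)
    (hV : ∀ x v₁ v₂, |V x v₁ v₂| ≤ CV) (hu₀ : ∀ x, 0 ≤ u x) (x : Euc d)
    (hsol : (⨅ v₁ : A₁, ⨆ v₂ : A₂, ((∑ i, ∑ j, a x i j * pd2 u i j x) +
      (∑ i, b x v₁ v₂ i * pd u i x) + V x v₁ v₂ * u x)) = 0) :
    ∑ i, ∑ j, a x i j * pd2 u i j x ≤ Cb * ‖fderiv ℝ u x‖ + CV * u x := by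
  have hdrift : ∀ v₁ v₂, |∑ i, b x v₁ v₂ i * pd u i x| ≤ Cb * ‖fderiv ℝ u x‖ := fun v₁ v₂ =>
    calc |∑ i, b x v₁ v₂ i * pd u i x| = ‖fderiv ℝ u x (b x v₁ v₂)‖ := by
          rw [apply_eq_sum_mul_single, Real.norm_eq_abs]
          rfl
      _ ≤ ‖fderiv ℝ u x‖ * ‖b x v₁ v₂‖ := (fderiv ℝ u x).le_opNorm _
      _ ≤ Cb * ‖fderiv ℝ u x‖ := by rw [mul_comm]; gcongr; exact hb x v₁ v₂
  have hpot : ∀ v₁ v₂, |V x v₁ v₂ * u x| ≤ CV * u x := fun v₁ v₂ => by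
    rw [abs_mul, abs_of_nonneg (hu₀ x)]
    exact mul_le_mul_of_nonneg_right (hV x v₁ v₂) (hu₀ x)
  have := le_ciInf_ciSup (F := fun v₁ v₂ => (∑ i, ∑ j, a x i j * pd2 u i j x) +
      (∑ i, b x v₁ v₂ i * pd u i x) + V x v₁ v₂ * u x)
    (c := (∑ i, ∑ j, a x i j * pd2 u i j x) - Cb * ‖fderiv ℝ u x‖ - CV * u x)
    (C := (∑ i, ∑ j, a x i j * pd2 u i j x) + Cb * ‖fderiv ℝ u x‖ + CV * u x)
    (fun v₁ v₂ => by linarith [abs_le.1 (hdrift v₁ v₂), abs_le.1 (hpot v₁ v₂)])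
    (fun v₁ v₂ => by linarith [abs_le.1 (hdrift v₁ v₂), abs_le.1 (hpot v₁ v₂)])
  rw [hsol] at this
  linarith

theorem abs_trace_le_mul_frob (M : Matrix (Fin d) (Fin d) ℝ) : |M.trace| ≤ d * frob M :=
  calc |M.trace| ≤ ∑ i, |M i i| := Finset.abs_sum_le_sum_abs _ _
    _ ≤ ∑ _i : Fin d, frob M := Finset.sum_le_sum fun i _ => Real.abs_le_sqrt <|
        (Finset.single_le_sum (f := fun j => M i j ^ 2) (fun _ _ => sq_nonneg _)
          (Finset.mem_univ i)).trans
        (Finset.single_le_sum (f := fun i => ∑ j, M i j ^ 2)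
          (fun _ _ => Finset.sum_nonneg fun _ _ => sq_nonneg _) (Finset.mem_univ i))
    _ = d * frob M := by simp

theorem exists_pos_mul_add_lt_mul_sq {η : ℝ} (hη : 0 < η) (b c : ℝ) :
    ∃ γ > 0, b * γ + c < η * γ ^ 2 := by
  set γ := max 1 ((|b| + |c| + 1) / η)
  have hγ₁ : 1 ≤ γ := le_max_left _ _
  have hηγ : |b| + |c| + 1 ≤ η * γ := by
    rw [← div_le_iff₀' hη]
    exact le_max_right _ _
  refine ⟨γ, by positivity, ?_⟩
  nlinarith [le_abs_self b, le_abs_self c, abs_nonneg c]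

theorem exp_mul_le_barrierProfile_sub {γ r : ℝ} (hγ : 0 ≤ γ) (hr : 0 ≤ r) :
    Real.exp (-(γ * r)) * (Real.exp (-γ) - Real.exp (-(2 * γ))) ≤
      barrierProfile γ (r ^ 2) - barrierProfile γ ((r + 2) ^ 2) := by
  have hnear : Real.exp (-(γ * r)) * Real.exp (-γ) ≤ barrierProfile γ (r ^ 2) := by
    rw [← Real.exp_add, barrierProfile, Real.exp_le_exp]
    have : √(1 + r ^ 2) ≤ r + 1 := Real.sqrt_le_iff.2 ⟨by linarith, by nlinarith⟩
    nlinarith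
  have hfar : barrierProfile γ ((r + 2) ^ 2) ≤ Real.exp (-(γ * r)) * Real.exp (-(2 * γ)) := by
    rw [← Real.exp_add, barrierProfile, Real.exp_le_exp]
    have : r + 2 ≤ √(1 + (r + 2) ^ 2) := Real.le_sqrt_of_sq_le (by linarith)
    nlinarith
  linarith

theorem statement15_general {d : ℕ}
    (A₁ A₂ : Type*) [Nonempty A₁]
    [Nonempty A₂]
    (a : Euc d → Matrix (Fin d) (Fin d) ℝ)
    (hposdef : ∀ x, (a x).PosDef)
    (habdd : ∃ Ca, ∀ x, frob (a x) ≤ Ca)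
    (η₀ : ℝ) (hη : 0 < η₀)
    (hellip : ∀ x : Euc d, ∀ ξ : Euc d, η₀ * ‖ξ‖ ^ 2 ≤ quadForm (a x) ξ)
    (b : Euc d → A₁ → A₂ → Euc d) (V : Euc d → A₁ → A₂ → ℝ)
    (hbbdd : ∃ C, ∀ x v₁ v₂, ‖b x v₁ v₂‖ ≤ C)
    (hVbdd : ∃ C, ∀ x v₁ v₂, |V x v₁ v₂| ≤ C)
    (u : Euc d → ℝ) (huC2 : ContDiff ℝ 2 u) (hupos : ∀ x, 0 < u x)
    (hsol : ∀ x : Euc d, (⨅ v₁ : A₁, ⨆ v₂ : A₂,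
      ((∑ i, ∑ j, a x i j * pd2 u i j x) + (∑ i, b x v₁ v₂ i * pd u i x) +
        V x v₁ v₂ * u x)) = 0) :
    ∃ γ > 0, ∃ C > 0, ∃ R, ∀ x : Euc d, R ≤ ‖x‖ →
      C * Real.exp (-(γ * ‖x‖)) ≤ u x := by
  obtain ⟨Ca, hCa⟩ := habdd
  obtain ⟨Cb, hCb⟩ := hbbdd
  obtain ⟨CV, hCV⟩ := hVbdd
  have hCb₀ : 0 ≤ Cb :=
    (norm_nonneg _).trans (hCb 0 (Classical.arbitrary A₁) (Classical.arbitrary A₂))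
  have hCV₀ : 0 ≤ CV :=
    (abs_nonneg _).trans (hCV 0 (Classical.arbitrary A₁) (Classical.arbitrary A₂))
  have hu₀ : ∀ x, 0 ≤ u x := fun x => (hupos x).le
  have htr : ∀ x, |(a x).trace| ≤ d * Ca := fun x =>
    (abs_trace_le_mul_frob _).trans (by gcongr; exact hCa x)
  obtain ⟨x₁, -, hx₁⟩ := (isCompact_closedBall (0 : Euc d) 1).exists_isMinOn ⟨0, by simp⟩
    huC2.continuous.continuousOn
  obtain ⟨γ, hγ, hγlarge⟩ := exists_pos_mul_add_lt_mul_sq (half_pos hη) (d * Ca + Cb) CV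
  refine ⟨γ, hγ, u x₁ * (Real.exp (-γ) - Real.exp (-(2 * γ))),
    mul_pos (hupos x₁) (sub_pos.2 (Real.exp_lt_exp.2 (by linarith))), 1, fun x hx => ?_⟩
  calc u x₁ * (Real.exp (-γ) - Real.exp (-(2 * γ))) * Real.exp (-(γ * ‖x‖))
      ≤ barrier γ (u x₁) (barrierProfile γ ((‖x‖ + 2) ^ 2)) x := by
        rw [barrier, mul_right_comm, mul_assoc]
        exact mul_le_mul_of_nonneg_left
          (exp_mul_le_barrierProfile_sub hγ.le (norm_nonneg x)) (hu₀ x₁)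
    _ ≤ u x := barrier_le_of_subsolution (fun x => (hposdef x).posSemidef) hη.le hellip htr huC2
        hu₀ (fun x => sum_mul_pd2_le_of_iInf_iSup_eq_zero hCb hCV hu₀ x (hsol x)) hCb₀ hCV₀
        (hupos x₁) (fun y hy => hx₁ (by simp [hy])) hγ.le (by linarith) hx (by linarith)

/-- Corollary 4.2 (b): exponential lower bound for positive solutions of the Isaacs
min-max equation. -/
theorem statement15 {d : ℕ} (hd : 1 ≤ d)
    (A₁ A₂ : Type*) [MetricSpace A₁] [CompactSpace A₁] [Nonempty A₁]
    [MetricSpace A₂] [CompactSpace A₂] [Nonempty A₂]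
    (a : Euc d → Matrix (Fin d) (Fin d) ℝ)
    (hposdef : ∀ x, (a x).PosDef)
    (haLip : ∀ R > 0, ∃ C > 0, ∀ x y : Euc d, ‖x‖ ≤ R → ‖y‖ ≤ R →
      frob (a x - a y) ≤ C * ‖x - y‖)
    (habdd : ∃ Ca, ∀ x, frob (a x) ≤ Ca)
    (η₀ : ℝ) (hη : 0 < η₀)
    (hellip : ∀ x : Euc d, ∀ ξ : Euc d, η₀ * ‖ξ‖ ^ 2 ≤ quadForm (a x) ξ)
    (b : Euc d → A₁ → A₂ → Euc d) (V : Euc d → A₁ → A₂ → ℝ)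
    (hbcont : Continuous (fun p : Euc d × A₁ × A₂ => b p.1 p.2.1 p.2.2))
    (hVcont : Continuous (fun p : Euc d × A₁ × A₂ => V p.1 p.2.1 p.2.2))
    (hbbdd : ∃ C, ∀ x v₁ v₂, ‖b x v₁ v₂‖ ≤ C)
    (hVbdd : ∃ C, ∀ x v₁ v₂, |V x v₁ v₂| ≤ C)
    (u : Euc d → ℝ) (huC2 : ContDiff ℝ 2 u) (hupos : ∀ x, 0 < u x)
    (hsol : ∀ x : Euc d, (⨅ v₁ : A₁, ⨆ v₂ : A₂,
      ((∑ i, ∑ j, a x i j * pd2 u i j x) + (∑ i, b x v₁ v₂ i * pd u i x) +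
        V x v₁ v₂ * u x)) = 0) :
    ∃ γ > 0, ∃ C > 0, ∃ R, ∀ x : Euc d, R ≤ ‖x‖ →
      C * Real.exp (-(γ * ‖x‖)) ≤ u x :=
  statement15_general A₁ A₂ a hposdef habdd η₀ hη hellip b V hbbdd hVbdd u huC2 hupos hsol
end
end
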